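/- Discrete Gronwall lemma with weakly singular kernel: let (e_n)_{n≥0} be nonnegative reals with e_0 = 0 and suppose e_n ≤ a + bτ Σ_{k=1}^{n−1} ((n−k)τ)^{−1/2} e_k for all 1 ≤ n ≤ N, where a, b ≥ 0, τ > 0, Nτ ≤ T. Then there exists a constant C = C(b, T) independent of τ and n such that e_n ≤ C·a for all 0 ≤ n ≤ N. -/

import Mathlib

open Finset

lemma gw_sum_inv_sqrt_le (M : ℕ) :
    ∑ m ∈ Icc 1 M, 1 / Real.sqrt m ≤ 2 * Real.sqrt M := by
  induction M with
  | zero => simp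
  | succ M ih =>
    rw [Finset.sum_Icc_succ_top (by omega)]
    have h1 : Real.sqrt M ≤ Real.sqrt (M + 1) := by
      apply Real.sqrt_le_sqrt; linarith
    have h2 : (0:ℝ) < Real.sqrt ((M:ℝ) + 1) := by
      apply Real.sqrt_pos.2; positivity
    have h3 : Real.sqrt ((M:ℝ)+1) * Real.sqrt ((M:ℝ)+1) = (M:ℝ)+1 :=
      Real.mul_self_sqrt (by positivity)
    have h4 : Real.sqrt (M:ℝ) * Real.sqrt (M:ℝ) = (M:ℝ) :=
      Real.mul_self_sqrt (by positivity)
    have key : 1 / Real.sqrt ((M:ℝ)+1) ≤ 2 * (Real.sqrt ((M:ℝ)+1) - Real.sqrt (M:ℝ)) := by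
      rw [div_le_iff₀ h2]
      nlinarith [Real.sqrt_nonneg (M:ℝ)]
    have hc : ((M+1 : ℕ) : ℝ) = (M:ℝ) + 1 := by push_cast; ring
    rw [hc]
    linarith

lemma gw_sum_reflect (M : ℕ) (f : ℕ → ℝ) :
    ∑ m ∈ Icc 1 (M-1), f (M - m) = ∑ m ∈ Icc 1 (M-1), f m := by
  apply Finset.sum_nbij' (fun m => M - m) (fun m => M - m)
  · intro m hm; simp only [mem_Icc] at *; omega
  · intro m hm; simp only [mem_Icc] at *; omega
  · intro m hm; simp only [mem_Icc] at *; omega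
  · intro m hm; simp only [mem_Icc] at *; omega
  · intro m hm; rfl

lemma gw_div_helper (X Y Z c : ℝ) (hX : 0 < X) (hY : 0 < Y) (hZ : 0 < Z) (hc : 0 ≤ c)
    (h : Z ≤ c * X) : 1/(X*Y) ≤ c/Z*(1/Y) := by
  rw [div_mul_div_comm, div_le_div_iff₀ (by positivity) (by positivity)]
  nlinarith

lemma gw_beta_sum_le (M : ℕ) :
    ∑ m ∈ Icc 1 (M-1), 1 / (Real.sqrt ((M - m : ℕ)) * Real.sqrt m) ≤ 6 := by
  rcases Nat.eq_zero_or_pos M with h | hM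
  · subst h; simp
  have hMpos : (0:ℝ) < (M:ℝ) := by exact_mod_cast hM
  have hsM : (0:ℝ) < Real.sqrt M := Real.sqrt_pos.2 hMpos
  have hpt : ∀ m ∈ Icc 1 (M-1),
      1 / (Real.sqrt ((M - m : ℕ)) * Real.sqrt m)
        ≤ Real.sqrt 2 / Real.sqrt M * (1 / Real.sqrt m + 1 / Real.sqrt ((M - m : ℕ))) := by
    intro m hm
    simp only [mem_Icc] at hm
    have hm1 : (1:ℝ) ≤ (m:ℝ) := by exact_mod_cast hm.1
    have hMm1 : (1:ℝ) ≤ ((M - m : ℕ):ℝ) := by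
      have : 1 ≤ M - m := by omega
      exact_mod_cast this
    have hsm : (0:ℝ) < Real.sqrt m := Real.sqrt_pos.2 (by linarith)
    have hsMm : (0:ℝ) < Real.sqrt ((M-m:ℕ)) := Real.sqrt_pos.2 (by linarith)
    rcases le_or_gt (2*m) M with hcase | hcase
    · have hkey : Real.sqrt M ≤ Real.sqrt 2 * Real.sqrt ((M-m:ℕ)) := by
        rw [← Real.sqrt_mul (by norm_num)]
        apply Real.sqrt_le_sqrt
        have hle : ((M - m : ℕ):ℝ) = (M:ℝ) - m := by
          have : m ≤ M := by omega
          push_cast [this]; ring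
        rw [hle]
        have : (2*m : ℝ) ≤ (M:ℝ) := by exact_mod_cast hcase
        linarith
      have h1 := gw_div_helper _ (Real.sqrt m) _ _ hsMm hsm hsM (Real.sqrt_nonneg 2) hkey
      have h2 : (0:ℝ) ≤ Real.sqrt 2 / Real.sqrt M * (1 / Real.sqrt ((M-m:ℕ))) := by positivity
      rw [mul_add]; linarith
    · have hkey : Real.sqrt M ≤ Real.sqrt 2 * Real.sqrt m := by
        rw [← Real.sqrt_mul (by norm_num)]
        apply Real.sqrt_le_sqrt
        have : (M:ℝ) < 2*m := by exact_mod_cast hcase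
        linarith
      have h1 := gw_div_helper _ (Real.sqrt ((M-m:ℕ))) _ _ hsm hsMm hsM (Real.sqrt_nonneg 2) hkey
      rw [mul_comm (Real.sqrt (m:ℕ))] at h1
      have h2 : (0:ℝ) ≤ Real.sqrt 2 / Real.sqrt M * (1 / Real.sqrt m) := by positivity
      rw [mul_add]; linarith
  calc ∑ m ∈ Icc 1 (M-1), 1 / (Real.sqrt ((M - m : ℕ)) * Real.sqrt m)
      ≤ ∑ m ∈ Icc 1 (M-1), Real.sqrt 2 / Real.sqrt M *
          (1 / Real.sqrt m + 1 / Real.sqrt ((M - m : ℕ))) := Finset.sum_le_sum hpt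
    _ = Real.sqrt 2 / Real.sqrt M *
          (∑ m ∈ Icc 1 (M-1), 1 / Real.sqrt m + ∑ m ∈ Icc 1 (M-1), 1 / Real.sqrt ((M-m:ℕ))) := by
        rw [← Finset.mul_sum, Finset.sum_add_distrib]
    _ = Real.sqrt 2 / Real.sqrt M * (2 * ∑ m ∈ Icc 1 (M-1), 1 / Real.sqrt m) := by
        rw [gw_sum_reflect M (fun m => 1 / Real.sqrt m)]; ring
    _ ≤ Real.sqrt 2 / Real.sqrt M * (2 * (2 * Real.sqrt ((M-1:ℕ)))) := by
        apply mul_le_mul_of_nonneg_left _ (by positivity)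
        have := gw_sum_inv_sqrt_le (M-1)
        linarith
    _ ≤ Real.sqrt 2 / Real.sqrt M * (4 * Real.sqrt M) := by
        apply mul_le_mul_of_nonneg_left _ (by positivity)
        have : Real.sqrt ((M-1:ℕ)) ≤ Real.sqrt M := by
          apply Real.sqrt_le_sqrt; exact_mod_cast Nat.sub_le M 1
        linarith
    _ = 4 * Real.sqrt 2 := by field_simp
    _ ≤ 6 := by nlinarith [Real.sq_sqrt (by norm_num : (0:ℝ) ≤ 2), Real.sqrt_nonneg 2]

set_option maxHeartbeats 1600000 in
theorem discrete_gronwall_weakly_singular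
    (b T : ℝ) (hb : 0 ≤ b) (hT : 0 < T) :
    ∃ C : ℝ, 0 < C ∧
      ∀ (N : ℕ) (τ a : ℝ) (e : ℕ → ℝ),
        0 < τ → (N : ℝ) * τ ≤ T → 0 ≤ a → (∀ n, 0 ≤ e n) → e 0 = 0 →
        (∀ n : ℕ, 1 ≤ n → n ≤ N →
          e n ≤ a + b * τ * ∑ k ∈ Icc 1 (n - 1), e k / Real.sqrt ((n - k : ℕ) * τ)) →
        ∀ n ≤ N, e n ≤ C * a := by
  have hsT : 0 ≤ Real.sqrt T := Real.sqrt_nonneg T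
  have h2bT : (0:ℝ) ≤ 2*b*Real.sqrt T := mul_nonneg (mul_nonneg (by norm_num) hb) hsT
  have hA1 : (0:ℝ) < 1 + 2*b*Real.sqrt T := by linarith
  refine ⟨(1 + 2*b*Real.sqrt T) * Real.exp (6*b^2*T), mul_pos hA1 (Real.exp_pos _), ?_⟩
  intro N τ a e hτ hNT ha he he0 hrec
  have hτs : (0:ℝ) < Real.sqrt τ := Real.sqrt_pos.2 hτ
  have hττ : Real.sqrt τ * Real.sqrt τ = τ := Real.mul_self_sqrt hτ.le
  -- Step 1: iterate the inequality once
  have claim : ∀ n, 1 ≤ n → n ≤ N →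
      e n ≤ (1 + 2*b*Real.sqrt T)*a + 6*b^2*τ * ∑ j ∈ Icc 1 (n-1), e j := by
    intro n hn1 hnN
    have H := hrec n hn1 hnN
    -- termwise substitution
    have hsub : ∀ k ∈ Icc 1 (n-1), e k / Real.sqrt ((n-k:ℕ)*τ) ≤
        (a + b*τ*∑ j ∈ Icc 1 (k-1), e j / Real.sqrt ((k-j:ℕ)*τ)) / Real.sqrt ((n-k:ℕ)*τ) := by
      intro k hk
      simp only [mem_Icc] at hk
      rw [div_eq_mul_inv, div_eq_mul_inv]
      exact mul_le_mul_of_nonneg_right (hrec k hk.1 (by omega)) (by positivity)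
    have heq : ∑ k ∈ Icc 1 (n-1),
        ((a + b*τ*∑ j ∈ Icc 1 (k-1), e j / Real.sqrt ((k-j:ℕ)*τ)) / Real.sqrt ((n-k:ℕ)*τ))
        = a*(∑ k ∈ Icc 1 (n-1), 1/Real.sqrt ((n-k:ℕ)*τ))
          + b*τ*(∑ k ∈ Icc 1 (n-1),
              (∑ j ∈ Icc 1 (k-1), e j / Real.sqrt ((k-j:ℕ)*τ))/Real.sqrt ((n-k:ℕ)*τ)) := by
      rw [Finset.mul_sum, Finset.mul_sum, ← Finset.sum_add_distrib]
      apply Finset.sum_congr rfl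
      intro k _; ring
    -- kernel sum bound
    have hK1 : ∑ k ∈ Icc 1 (n-1), 1/Real.sqrt ((n-k:ℕ)*τ)
        ≤ 2*Real.sqrt ((n-1:ℕ)) / Real.sqrt τ := by
      have h1 : ∀ k : ℕ, 1/Real.sqrt ((n-k:ℕ)*τ)
          = (1/Real.sqrt ((n-k:ℕ))) * (1/Real.sqrt τ) := by
        intro k; rw [Real.sqrt_mul (Nat.cast_nonneg (n-k)) τ]; ring
      calc ∑ k ∈ Icc 1 (n-1), 1/Real.sqrt ((n-k:ℕ)*τ)
          = (∑ k ∈ Icc 1 (n-1), 1/Real.sqrt ((n-k:ℕ))) * (1/Real.sqrt τ) := by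
            rw [Finset.sum_mul]; exact Finset.sum_congr rfl (fun k _ => h1 k)
        _ = (∑ m ∈ Icc 1 (n-1), 1/Real.sqrt m) * (1/Real.sqrt τ) := by
            rw [gw_sum_reflect n (fun m => 1/Real.sqrt m)]
        _ ≤ (2*Real.sqrt ((n-1:ℕ))) * (1/Real.sqrt τ) :=
            mul_le_mul_of_nonneg_right (gw_sum_inv_sqrt_le _) (by positivity)
        _ = 2*Real.sqrt ((n-1:ℕ)) / Real.sqrt τ := by ring
    have hpiece1 : b*τ*(a*(∑ k ∈ Icc 1 (n-1), 1/Real.sqrt ((n-k:ℕ)*τ)))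
        ≤ 2*b*Real.sqrt T*a := by
      have h2 : b*τ*(a*(∑ k ∈ Icc 1 (n-1), 1/Real.sqrt ((n-k:ℕ)*τ)))
          ≤ b*τ*(a*(2*Real.sqrt ((n-1:ℕ))/Real.sqrt τ)) :=
        mul_le_mul_of_nonneg_left (mul_le_mul_of_nonneg_left hK1 ha) (mul_nonneg hb hτ.le)
      have h3 : b*τ*(a*(2*Real.sqrt ((n-1:ℕ))/Real.sqrt τ))
          = 2*b*a*(Real.sqrt τ * Real.sqrt ((n-1:ℕ))) := by
        have hdiv : τ/Real.sqrt τ = Real.sqrt τ := by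
          rw [div_eq_iff hτs.ne']; exact hττ.symm
        calc b*τ*(a*(2*Real.sqrt ((n-1:ℕ))/Real.sqrt τ))
            = 2*b*a*Real.sqrt ((n-1:ℕ))*(τ/Real.sqrt τ) := by ring
          _ = 2*b*a*Real.sqrt ((n-1:ℕ))*Real.sqrt τ := by rw [hdiv]
          _ = 2*b*a*(Real.sqrt τ * Real.sqrt ((n-1:ℕ))) := by ring
      have h4 : Real.sqrt τ * Real.sqrt ((n-1:ℕ)) = Real.sqrt (τ*((n-1:ℕ))) :=
        (Real.sqrt_mul hτ.le _).symm
      have h5 : Real.sqrt (τ*((n-1:ℕ))) ≤ Real.sqrt T := by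
        apply Real.sqrt_le_sqrt
        have hle : ((n-1:ℕ):ℝ) ≤ (N:ℝ) := by exact_mod_cast (by omega : n-1 ≤ N)
        nlinarith
      have h6 : 2*b*a*(Real.sqrt τ * Real.sqrt ((n-1:ℕ))) ≤ 2*b*a*Real.sqrt T := by
        rw [h4]; exact mul_le_mul_of_nonneg_left h5 (mul_nonneg (mul_nonneg (by norm_num) hb) ha)
      calc b*τ*(a*(∑ k ∈ Icc 1 (n-1), 1/Real.sqrt ((n-k:ℕ)*τ)))
          ≤ 2*b*a*(Real.sqrt τ * Real.sqrt ((n-1:ℕ))) := by rw [← h3]; exact h2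
        _ ≤ 2*b*a*Real.sqrt T := h6
        _ = 2*b*Real.sqrt T*a := by ring
    -- double sum
    have heq2 : ∑ k ∈ Icc 1 (n-1),
        ((∑ j ∈ Icc 1 (k-1), e j / Real.sqrt ((k-j:ℕ)*τ))/Real.sqrt ((n-k:ℕ)*τ))
        = (1/τ) * ∑ k ∈ Icc 1 (n-1), ∑ j ∈ Icc 1 (k-1),
            e j * (1/(Real.sqrt ((n-k:ℕ)) * Real.sqrt ((k-j:ℕ)))) := by
      rw [Finset.mul_sum]
      apply Finset.sum_congr rfl
      intro k hk
      simp only [mem_Icc] at hk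
      rw [Finset.sum_div, Finset.mul_sum]
      apply Finset.sum_congr rfl
      intro j hj
      simp only [mem_Icc] at hj
      have hkj : (0:ℝ) < Real.sqrt ((k-j:ℕ)) := by
        apply Real.sqrt_pos.2; exact_mod_cast (by omega : 0 < k - j)
      have hnk : (0:ℝ) < Real.sqrt ((n-k:ℕ)) := by
        apply Real.sqrt_pos.2; exact_mod_cast (by omega : 0 < n - k)
      have key : ∀ (x y s E : ℝ), 0 < x → 0 < y → 0 < s →
          E/(y*s)/(x*s) = 1/(s*s) * (E * (1/(x*y))) := by
        intro x y s E hx hy hs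
        ring
      rw [Real.sqrt_mul (Nat.cast_nonneg (k-j)) τ, Real.sqrt_mul (Nat.cast_nonneg (n-k)) τ,
        key _ _ _ _ hnk hkj hτs, hττ]
    have hDS : ∑ k ∈ Icc 1 (n-1), ∑ j ∈ Icc 1 (k-1),
          e j * (1/(Real.sqrt ((n-k:ℕ)) * Real.sqrt ((k-j:ℕ))))
        ≤ 6 * ∑ j ∈ Icc 1 (n-1), e j := by
      have hrw : ∀ k ∈ Icc 1 (n-1), ∑ j ∈ Icc 1 (k-1),
            e j * (1/(Real.sqrt ((n-k:ℕ)) * Real.sqrt ((k-j:ℕ))))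
          = ∑ j ∈ Icc 1 (n-1), if j < k then
              e j * (1/(Real.sqrt ((n-k:ℕ)) * Real.sqrt ((k-j:ℕ)))) else 0 := by
        intro k hk
        simp only [mem_Icc] at hk
        have hset : Icc 1 (k-1) = (Icc 1 (n-1)).filter (fun j => j < k) := by
          ext j; simp only [mem_Icc, mem_filter]; omega
        rw [hset, Finset.sum_filter]
      rw [Finset.sum_congr rfl hrw, Finset.sum_comm]
      have hinner : ∀ j ∈ Icc 1 (n-1),
          (∑ k ∈ Icc 1 (n-1), if j < k then
              e j * (1/(Real.sqrt ((n-k:ℕ)) * Real.sqrt ((k-j:ℕ)))) else 0) ≤ 6 * e j := by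
        intro j hj
        simp only [mem_Icc] at hj
        rw [← Finset.sum_filter]
        have hset : (Icc 1 (n-1)).filter (fun k => j < k) = Icc (j+1) (n-1) := by
          ext k; simp only [mem_Icc, mem_filter]; omega
        rw [hset]
        have hre : ∑ k ∈ Icc (j+1) (n-1),
            e j * (1/(Real.sqrt ((n-k:ℕ)) * Real.sqrt ((k-j:ℕ))))
            = e j * ∑ m ∈ Icc 1 ((n-j)-1),
                1/(Real.sqrt (((n-j) - m : ℕ)) * Real.sqrt m) := by
          rw [Finset.mul_sum]
          apply Finset.sum_nbij' (fun k => k - j) (fun m => m + j)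
          · intro k hk; simp only [mem_Icc] at *; omega
          · intro m hm; simp only [mem_Icc] at *; omega
          · intro k hk; simp only [mem_Icc] at hk; omega
          · intro m hm; simp only [mem_Icc] at hm; omega
          · intro k hk
            simp only [mem_Icc] at hk
            have h1 : n - k = (n - j) - (k - j) := by omega
            rw [h1]
        rw [hre]
        calc e j * ∑ m ∈ Icc 1 ((n-j)-1),
              1/(Real.sqrt (((n-j) - m : ℕ)) * Real.sqrt m)
            ≤ e j * 6 := mul_le_mul_of_nonneg_left (gw_beta_sum_le (n-j)) (he j)
          _ = 6 * e j := by ring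
      calc ∑ j ∈ Icc 1 (n-1), ∑ k ∈ Icc 1 (n-1), (if j < k then
              e j * (1/(Real.sqrt ((n-k:ℕ)) * Real.sqrt ((k-j:ℕ)))) else 0)
          ≤ ∑ j ∈ Icc 1 (n-1), 6 * e j := Finset.sum_le_sum hinner
        _ = 6 * ∑ j ∈ Icc 1 (n-1), e j := by rw [Finset.mul_sum]
    -- combine
    have hS : ∑ k ∈ Icc 1 (n-1), e k / Real.sqrt ((n-k:ℕ)*τ)
        ≤ a*(∑ k ∈ Icc 1 (n-1), 1/Real.sqrt ((n-k:ℕ)*τ))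
          + b*τ*((1/τ) * ∑ k ∈ Icc 1 (n-1), ∑ j ∈ Icc 1 (k-1),
              e j * (1/(Real.sqrt ((n-k:ℕ)) * Real.sqrt ((k-j:ℕ))))) := by
      calc ∑ k ∈ Icc 1 (n-1), e k / Real.sqrt ((n-k:ℕ)*τ)
          ≤ ∑ k ∈ Icc 1 (n-1), ((a + b*τ*∑ j ∈ Icc 1 (k-1), e j / Real.sqrt ((k-j:ℕ)*τ))
              / Real.sqrt ((n-k:ℕ)*τ)) := Finset.sum_le_sum hsub
        _ = _ := by rw [heq, heq2]
    have hmul := mul_le_mul_of_nonneg_left hS (mul_nonneg hb hτ.le)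
    have hexpand : b*τ*(a*(∑ k ∈ Icc 1 (n-1), 1/Real.sqrt ((n-k:ℕ)*τ))
          + b*τ*((1/τ) * ∑ k ∈ Icc 1 (n-1), ∑ j ∈ Icc 1 (k-1),
              e j * (1/(Real.sqrt ((n-k:ℕ)) * Real.sqrt ((k-j:ℕ))))))
        = b*τ*(a*(∑ k ∈ Icc 1 (n-1), 1/Real.sqrt ((n-k:ℕ)*τ)))
          + b^2*τ*(∑ k ∈ Icc 1 (n-1), ∑ j ∈ Icc 1 (k-1),
              e j * (1/(Real.sqrt ((n-k:ℕ)) * Real.sqrt ((k-j:ℕ))))) := by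
      field_simp
    have hmul2 := mul_le_mul_of_nonneg_left hDS (show (0:ℝ) ≤ b^2*τ by positivity)
    linarith [hmul, hexpand, hmul2, hpiece1, H]
  -- Step 2: standard discrete Gronwall
  have hA : (1:ℝ) ≤ 1 + 2*b*Real.sqrt T := by linarith
  have hB : (0:ℝ) ≤ 6*b^2 := by positivity
  have hx : (1:ℝ) ≤ 1 + 6*b^2*τ := by nlinarith
  have bound : ∀ n, n ≤ N → e n ≤ (1 + 2*b*Real.sqrt T)*a*(1 + 6*b^2*τ)^n := by
    intro n
    induction n using Nat.strong_induction_on with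
    | _ n ih =>
      intro hnN
      rcases Nat.eq_zero_or_pos n with rfl | hn
      · rw [he0, pow_zero, mul_one]; exact mul_nonneg hA1.le ha
      · have hcl := claim n hn hnN
        have hsum : ∑ j ∈ Icc 1 (n-1), e j
            ≤ ∑ j ∈ Finset.range n, (1 + 2*b*Real.sqrt T)*a*(1 + 6*b^2*τ)^j := by
          calc ∑ j ∈ Icc 1 (n-1), e j
              ≤ ∑ j ∈ Icc 1 (n-1), (1 + 2*b*Real.sqrt T)*a*(1 + 6*b^2*τ)^j := by
                apply Finset.sum_le_sum
                intro j hj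
                simp only [mem_Icc] at hj
                exact ih j (by omega) (by omega)
            _ ≤ _ := by
                apply Finset.sum_le_sum_of_subset_of_nonneg
                · intro j hj; simp only [mem_Icc, Finset.mem_range] at *; omega
                · intro j _ _
                  exact mul_nonneg (mul_nonneg hA1.le ha) (pow_nonneg (by positivity) j)
        have hgeom : (∑ j ∈ Finset.range n, (1 + 6*b^2*τ)^j) * ((1 + 6*b^2*τ) - 1)
            = (1 + 6*b^2*τ)^n - 1 := geom_sum_mul _ n
        have hfact : ∑ j ∈ Finset.range n, (1 + 2*b*Real.sqrt T)*a*(1 + 6*b^2*τ)^j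
            = (1 + 2*b*Real.sqrt T)*a*(∑ j ∈ Finset.range n, (1 + 6*b^2*τ)^j) := by
          rw [Finset.mul_sum]
        have h2 : 6*b^2*τ * (∑ j ∈ Finset.range n, (1 + 6*b^2*τ)^j)
            = (1 + 6*b^2*τ)^n - 1 := by rw [← hgeom]; ring
        have hAa : (0:ℝ) ≤ (1 + 2*b*Real.sqrt T)*a := mul_nonneg hA1.le ha
        calc e n ≤ (1 + 2*b*Real.sqrt T)*a + 6*b^2*τ * ∑ j ∈ Icc 1 (n-1), e j := hcl
          _ ≤ (1 + 2*b*Real.sqrt T)*a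
              + 6*b^2*τ * ((1 + 2*b*Real.sqrt T)*a*(∑ j ∈ Finset.range n, (1 + 6*b^2*τ)^j)) := by
              have := mul_le_mul_of_nonneg_left hsum (show (0:ℝ) ≤ 6*b^2*τ by positivity)
              rw [hfact] at this
              linarith
          _ = (1 + 2*b*Real.sqrt T)*a*(1 + 6*b^2*τ * (∑ j ∈ Finset.range n, (1 + 6*b^2*τ)^j)) := by
              ring
          _ = (1 + 2*b*Real.sqrt T)*a*(1 + 6*b^2*τ)^n := by rw [h2]; ring
  intro n hnN
  have hpow : (1 + 6*b^2*τ)^n ≤ Real.exp (6*b^2*T) := by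
    have h1 : (1 + 6*b^2*τ) ≤ Real.exp (6*b^2*τ) := by
      have := Real.add_one_le_exp (6*b^2*τ)
      linarith
    have h2 : (1 + 6*b^2*τ)^n ≤ (Real.exp (6*b^2*τ))^n :=
      pow_le_pow_left₀ (by linarith) h1 n
    have h3 : (Real.exp (6*b^2*τ))^n = Real.exp ((n:ℝ)*(6*b^2*τ)) := by
      rw [← Real.exp_nat_mul]
    have h4 : (n:ℝ)*(6*b^2*τ) ≤ 6*b^2*T := by
      have hn : (n:ℝ) ≤ (N:ℝ) := by exact_mod_cast hnN
      have : (n:ℝ)*τ ≤ T := by nlinarith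
      nlinarith
    calc (1 + 6*b^2*τ)^n ≤ (Real.exp (6*b^2*τ))^n := h2
      _ = Real.exp ((n:ℝ)*(6*b^2*τ)) := h3
      _ ≤ Real.exp (6*b^2*T) := Real.exp_le_exp.2 h4
  have hAa : (0:ℝ) ≤ (1 + 2*b*Real.sqrt T)*a := mul_nonneg hA1.le ha
  calc e n ≤ (1 + 2*b*Real.sqrt T)*a*(1 + 6*b^2*τ)^n := bound n hnN
    _ ≤ (1 + 2*b*Real.sqrt T)*a*Real.exp (6*b^2*T) :=
        mul_le_mul_of_nonneg_left hpow hAa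
    _ = (1 + 2*b*Real.sqrt T) * Real.exp (6*b^2*T) * a := by ring
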